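/- Let α ∈ A(n) be periodic, and write α = β^i where β = ap(α) is the aperiodic prefix of α, p = |β|, and i ≥ 2. Then the string 0^{p−1}·1·β^{i−1} is an aperiodic asymmetric bracelet of length n. -/

import Mathlib

/-- Concatenation of `t` copies of `γ`. -/
def listPow (γ : List Bool) (t : ℕ) : List Bool := (List.replicate t γ).flatten

/-- A string is a necklace if it is lexicographically minimal among its rotations. -/
def IsNecklace (α : List Bool) : Prop := ∀ k : ℕ, α ≤ α.rotate k

/-- A necklace is symmetric if its reversal is one of its rotations. -/
def IsSymmetric (α : List Bool) : Prop := List.IsRotated α.reverse α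

/-- A string is an asymmetric bracelet if it is a necklace that is lexicographically
strictly smaller than every rotation of its reversal. -/
def IsAsymBracelet (α : List Bool) : Prop :=
  IsNecklace α ∧ ∀ k : ℕ, α < α.reverse.rotate k

/-- `A n`: the set of asymmetric bracelets of length `n`. -/
def A (n : ℕ) : Set (List Bool) := {α | α.length = n ∧ IsAsymBracelet α}

/-- `S n`: all length-`n` strings that are rotations of some asymmetric bracelet. -/
def S (n : ℕ) : Set (List Bool) := {β | ∃ α ∈ A n, List.IsRotated α β}

/-- A string is periodic if it is `γ^j` for some string `γ` and some `j ≥ 2`. -/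
def IsPeriodic (α : List Bool) : Prop := ∃ γ : List Bool, ∃ j : ℕ, 2 ≤ j ∧ listPow γ j = α

/-- `ap α`: the aperiodic prefix, i.e. the shortest `γ` with `α = γ^t`. -/
noncomputable def ap (α : List Bool) : List Bool :=
  α.take (sInf {p | ∃ γ : List Bool, γ.length = p ∧ ∃ t : ℕ, listPow γ t = α})

/-- Flip the first occurrence of the bit `b`. -/
def flipFirst (b : Bool) : List Bool → List Bool
  | [] => []
  | a :: rest => if a = b then (!b) :: rest else a :: flipFirst b rest

/-- Flip the first `1` to a `0`. -/
def firstone (α : List Bool) : List Bool := flipFirst true α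

/-- Flip the last `0` to a `1`. -/
def lastzero (α : List Bool) : List Bool := (flipFirst false α.reverse).reverse

/-- The lexicographically least rotation of `α`. -/
noncomputable def neckOf (α : List Bool) : List Bool :=
  ((List.range (α.length + 1)).map α.rotate).foldr min α

/-- Flip the last bit (a `1`) to `0` and take the lexicographically least rotation. -/
noncomputable def lastone (α : List Bool) : List Bool := neckOf (α.dropLast ++ [false])

/-- Flip the first bit (a `0`) to `1` and take the lexicographically least rotation. -/
noncomputable def firstzero (α : List Bool) : List Bool := neckOf (true :: α.tail)

/-- The root `0^{n-4}1011`. -/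
def rootStr (n : ℕ) : List Bool := List.replicate (n - 4) false ++ [true, false, true, true]

open Classical in
/-- The parent rule. -/
noncomputable def parentStr (n : ℕ) (α : List Bool) : List Bool :=
  if firstone α ∈ A n then firstone α
  else if lastone α ∈ A n then lastone α
  else lastzero α

/-- Cyclic window of length `n` of `o` starting at position `i` (0-indexed). -/
def cycWin (o : List Bool) (n i : ℕ) : List Bool :=
  (List.range n).map fun k => o.getD ((i + k) % o.length) false

/-- `o` is an orientable sequence of order `n`: its forward cyclic windows of length `n`
together with their reversals are `2·|o|` pairwise distinct strings. -/
def IsOS (n : ℕ) (o : List Bool) : Prop :=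
  ∀ i < o.length, ∀ j < o.length,
    (cycWin o n i = cycWin o n j → i = j) ∧ cycWin o n i ≠ (cycWin o n j).reverse

open Classical in
/-- The successor rule `g`. -/
noncomputable def succRule (α : List Bool) : Bool :=
  let n := α.length
  let i := n - α.reverse.idxOf true
  let j := α.tail.idxOf false + 2
  let β₁ := List.replicate (n - i) false ++ true :: α.tail.take (i - 1)
  let β₂ := α.tail ++ [true]
  let β₃ := α.drop (j - 1) ++ false :: List.replicate (j - 2) true
  if (β₁ ∈ A n ∧ firstone β₁ ∈ A n)
      ∨ (β₂ ∈ A n ∧ lastone β₂ ∈ A n ∧ firstone β₂ ∉ A n)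
      ∨ (β₃ ∈ A n ∧ lastzero β₃ ∈ A n ∧ firstone β₃ ∉ A n ∧ lastone β₃ ∉ A n)
  then !α.headD false else α.headD false

/-- The shift map `σ(a₁a₂⋯a_n) = a₂⋯a_n·g(a₁a₂⋯a_n)`. -/
noncomputable def sigmaMap (α : List Bool) : List Bool := α.tail ++ [succRule α]

/-!
Write `β = x ++ [1]`, `q = |x|` and `γ = 0^q 1 β^{i-1}`. Since `β^i` is an asymmetric
necklace, so is `β`; hence `β` ends in `1`, and `x` contains a `1` (otherwise `β = 0^q 1` would
be a rotation of its own reversal). So `β^{i-1}` ends in `1` and has no run of `q` zeros, which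
makes the leading block `0^q 1` the unique longest run of zeros of the cyclic word `γ`: every
nontrivial rotation of `γ` is strictly larger than `γ`, so `γ` is an aperiodic necklace. The
reversal of `γ` is a rotation of `0^q 1 (x^R 1)^{i-1}`, a word of the same shape, and
`β < x^R 1` (asymmetry of `β`) puts `γ` below it as well.
-/

open List

theorem List.append_lt_append_of_length_eq {x y : List Bool} (u v : List Bool)
    (hlen : x.length = y.length) (h : x < y) : x ++ u < y ++ v := by
  induction x generalizing y with
  | nil => cases y with
    | nil => exact absurd h (lt_irrefl _)
    | cons => simp at hlen
  | cons a x ih =>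
    obtain _ | ⟨b, y⟩ := y
    · simp at hlen
    rcases List.cons_lt_cons_iff.1 h with hab | ⟨rfl, hxy⟩
    · exact List.cons_lt_cons_iff.2 (Or.inl hab)
    · exact List.cons_lt_cons_iff.2 (Or.inr ⟨rfl, ih (by simpa using hlen) hxy⟩)

theorem replicate_false_append_true_lt {q : ℕ} {y : List Bool} (B : List Bool)
    (h : true ∈ y.take q) : replicate q false ++ true :: B < y := by
  induction q generalizing y with
  | zero => simp at h
  | succ q ih =>
    obtain _ | ⟨b, y⟩ := y
    · simp at h
    cases b
    · exact List.cons_lt_cons_iff.2 (Or.inr ⟨rfl, ih (by simpa using h)⟩)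
    · exact List.cons_lt_cons_iff.2 (Or.inl (by decide))

theorem listPow_zero (w : List Bool) : listPow w 0 = [] := rfl

theorem listPow_succ (w : List Bool) (t : ℕ) : listPow w (t + 1) = w ++ listPow w t := by
  simp [listPow, replicate_succ]

theorem listPow_succ' (w : List Bool) (t : ℕ) : listPow w (t + 1) = listPow w t ++ w := by
  simp [listPow, replicate_succ']

theorem length_listPow (w : List Bool) (t : ℕ) : (listPow w t).length = t * w.length := by
  induction t with
  | zero => simp [listPow_zero]
  | succ t ih => rw [listPow_succ, length_append, ih]; ring

theorem reverse_listPow (w : List Bool) (t : ℕ) :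
    (listPow w t).reverse = listPow w.reverse t := by
  induction t with
  | zero => rfl
  | succ t ih => rw [listPow_succ, listPow_succ', reverse_append, ih]

theorem append_listPow_append_comm (x y : List Bool) (t : ℕ) :
    x ++ listPow (y ++ x) t = listPow (x ++ y) t ++ x := by
  induction t with
  | zero => simp [listPow_zero]
  | succ t ih => simp only [listPow_succ, append_assoc, ih]

theorem rotate_one_listPow_cons (a : Bool) (y : List Bool) (t : ℕ) :
    (listPow (a :: y) t).rotate 1 = listPow (y ++ [a]) t := by
  cases t with
  | zero => rfl
  | succ t =>
    rw [listPow_succ, cons_append, rotate_cons_succ, rotate_zero, ← singleton_append,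
      append_listPow_append_comm, listPow_succ', append_assoc]

theorem rotate_listPow (w : List Bool) (t k : ℕ) :
    (listPow w t).rotate k = listPow (w.rotate k) t := by
  induction k with
  | zero => simp
  | succ k ih =>
    rw [← rotate_rotate, ih, ← rotate_rotate]
    obtain _ | ⟨a, y⟩ := w.rotate k
    · simp [listPow]
    · rw [rotate_one_listPow_cons, rotate_cons_succ, rotate_zero]

theorem listPow_lt_listPow_iff {x y : List Bool} {t : ℕ} (ht : t ≠ 0)
    (hlen : x.length = y.length) : listPow x t < listPow y t ↔ x < y := by
  obtain ⟨t, rfl⟩ := Nat.exists_eq_succ_of_ne_zero ht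
  refine ⟨fun h => ?_, fun h => ?_⟩
  · by_contra hxy
    rcases (not_lt.1 hxy).lt_or_eq with hyx | rfl
    · rw [listPow_succ, listPow_succ] at h
      exact lt_asymm h (List.append_lt_append_of_length_eq _ _ hlen.symm hyx)
    · exact lt_irrefl _ h
  · rw [listPow_succ, listPow_succ]
    exact List.append_lt_append_of_length_eq _ _ hlen h

/-- Every nonempty suffix of `x` has a `1` among its first `q` letters; equivalently, `x` ends
in `1` and contains no run of `q` zeros. -/
def OneDense (q : ℕ) (x : List Bool) : Prop := ∀ m < x.length, true ∈ (x.drop m).take q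

namespace OneDense

variable {q : ℕ} {x y : List Bool}

theorem mem_take_drop_append (h : OneDense q x) {m : ℕ} (hm : m < x.length) (t : List Bool) :
    true ∈ (x.drop m ++ t).take q := by
  rw [take_append]
  exact mem_append_left _ (h m hm)

theorem lt_drop_append (h : OneDense q x) {m : ℕ} (hm : m < x.length) (B t : List Bool) :
    replicate q false ++ true :: B < x.drop m ++ t :=
  replicate_false_append_true_lt B (h.mem_take_drop_append hm t)

theorem append (hx : OneDense q x) (hy : OneDense q y) : OneDense q (x ++ y) := by
  intro m hm
  by_cases hmx : m < x.length
  · rw [drop_append_of_le_length hmx.le]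
    exact hx.mem_take_drop_append hmx y
  · rw [drop_append, drop_eq_nil_of_le (by omega), nil_append]
    exact hy _ (by rw [length_append] at hm; omega)

theorem listPow (h : OneDense q x) (t : ℕ) : OneDense q (listPow x t) := by
  induction t with
  | zero => intro m hm; simp [listPow_zero] at hm
  | succ t ih => rw [listPow_succ]; exact h.append ih

end OneDense

theorem oneDense_append_true {q : ℕ} {x : List Bool} (h : x.length < q) :
    OneDense q (x ++ [true]) := by
  intro m hm
  rw [length_append, length_singleton] at hm
  have hlen : (x.drop m ++ [true]).length ≤ q := by
    rw [length_append, length_drop, length_singleton]; omega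
  rw [drop_append_of_le_length (by omega), take_of_length_le hlen]
  exact mem_append_right _ (mem_singleton_self _)

theorem oneDense_length_append_true {x : List Bool} (hx : true ∈ x) :
    OneDense x.length (x ++ [true]) := by
  obtain ⟨s, v, rfl⟩ := append_of_mem hx
  have hsplit : s ++ true :: v ++ [true] = (s ++ [true]) ++ (v ++ [true]) := by simp
  have hlen : (s ++ true :: v).length = s.length + v.length + 1 := by
    simp only [length_append, length_cons]; omega
  rw [hsplit]
  exact (oneDense_append_true (by omega)).append (oneDense_append_true (by omega))

theorem replicate_false_append_true_lt_rotate {q k : ℕ} {w : List Bool} (B : List Bool)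
    (hq : 0 < q) (hw : OneDense q w) (hk0 : 0 < k)
    (hk : k < (replicate q false ++ true :: w).length) :
    replicate q false ++ true :: B < (replicate q false ++ true :: w).rotate k := by
  obtain ⟨q, rfl⟩ := Nat.exists_eq_add_one_of_ne_zero hq.ne'
  obtain ⟨k, rfl⟩ := Nat.exists_eq_add_one_of_ne_zero hk0.ne'
  have htail : OneDense (q + 1) (replicate q false ++ true :: w) := by
    rw [← singleton_append, ← append_assoc]
    exact (oneDense_append_true (by simp)).append hw
  have hk' : k < (replicate q false ++ true :: w).length := by
    simp only [length_append, length_replicate, length_cons] at hk ⊢; omega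
  rw [rotate_eq_drop_append_take hk.le]
  simp only [replicate_succ, cons_append, drop_succ_cons]
  exact htail.lt_drop_append hk' _ _

section Rotations

variable {γ : List Bool}

theorem isNecklace_of_lt_rotate (h : ∀ k, 0 < k → k < γ.length → γ < γ.rotate k) :
    IsNecklace γ := by
  intro k
  rcases eq_or_ne γ [] with rfl | hγ
  · simp
  rw [← rotate_mod]
  rcases Nat.eq_zero_or_pos (k % γ.length) with hk | hk
  · rw [hk, rotate_zero]
  · exact (h _ hk (Nat.mod_lt _ (length_pos_of_ne_nil hγ))).le

theorem not_isPeriodic_of_lt_rotate (hγ : γ ≠ [])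
    (h : ∀ k, 0 < k → k < γ.length → γ < γ.rotate k) : ¬ IsPeriodic γ := by
  rintro ⟨δ, j, hj, rfl⟩
  have hδ : 0 < δ.length := by
    have := length_pos_of_ne_nil hγ
    rw [length_listPow] at this
    exact Nat.pos_of_mul_pos_left this
  have hfix : (listPow δ j).rotate δ.length = listPow δ j := by
    rw [rotate_listPow, rotate_length]
  have := h δ.length hδ (by rw [length_listPow]; nlinarith)
  exact lt_irrefl _ (hfix ▸ this)

end Rotations

theorem IsAsymBracelet.of_listPow {β : List Bool} {i : ℕ} (h : IsAsymBracelet (listPow β i))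
    (hi : i ≠ 0) : IsAsymBracelet β := by
  refine ⟨fun k => ?_, fun k => ?_⟩
  · have := h.1 k
    rwa [rotate_listPow, ← not_lt, listPow_lt_listPow_iff hi (by simp), not_lt] at this
  · have := h.2 k
    rwa [reverse_listPow, rotate_listPow, listPow_lt_listPow_iff hi (by simp)] at this

theorem exists_eq_replicate_false_append_true {l : List Bool} (h : true ∈ l) :
    ∃ a v, l = replicate a false ++ true :: v := by
  induction l with
  | nil => simp at h
  | cons b l ih =>
    cases b
    · obtain ⟨a, v, rfl⟩ := ih (by simpa using h)
      exact ⟨a + 1, v, rfl⟩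
    · exact ⟨0, l, rfl⟩

theorem eq_replicate_false_of_true_not_mem {l : List Bool} (h : true ∉ l) :
    l = replicate l.length false :=
  eq_replicate_iff.2 ⟨rfl, fun b hb => by cases b <;> simp_all⟩

theorem IsNecklace.exists_eq_append_true {β : List Bool} (h : IsNecklace β) (ht : true ∈ β) :
    ∃ x, β = x ++ [true] := by
  obtain ⟨a, v, rfl⟩ := exists_eq_replicate_false_append_true ht
  rcases eq_nil_or_concat v with rfl | ⟨v, b, rfl⟩
  · exact ⟨replicate a false, by simp⟩
  cases b
  · -- the rotation moving the final `0` to the front has a longer initial run of zeros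
    exfalso
    have hrot := h (replicate a false ++ true :: v).length
    rw [concat_eq_append, ← cons_append, ← append_assoc, rotate_append_length_eq,
      singleton_append, ← cons_append, ← replicate_succ] at hrot
    refine (replicate_false_append_true_lt v ?_).not_ge hrot
    simp [take_append]
  · exact ⟨replicate a false ++ true :: v, by simp⟩

theorem IsAsymBracelet.exists_eq_append_true {β : List Bool} (h : IsAsymBracelet β) :
    ∃ x, β = x ++ [true] ∧ true ∈ x := by
  have hβ : true ∈ β := by
    by_contra hβ
    have := h.2 0
    rw [rotate_zero, eq_replicate_false_of_true_not_mem hβ, reverse_replicate] at this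
    exact lt_irrefl _ this
  obtain ⟨x, rfl⟩ := h.1.exists_eq_append_true hβ
  refine ⟨x, rfl, ?_⟩
  by_contra hx
  have := h.2 1
  rw [eq_replicate_false_of_true_not_mem hx] at this
  simp at this

theorem reverse_replicate_false_append_listPow (q m : ℕ) (x : List Bool) :
    (replicate q false ++ true :: listPow (x ++ [true]) m).reverse =
      (replicate q false ++ true :: listPow (x.reverse ++ [true]) m).rotate q := by
  have hrot := rotate_append_length_eq (replicate q false) (true :: listPow (x.reverse ++ [true]) m)
  rw [length_replicate] at hrot
  rw [hrot, reverse_append, reverse_cons, reverse_listPow, reverse_append, reverse_replicate,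
    reverse_singleton, ← append_listPow_append_comm, singleton_append]

theorem isAsymBracelet_replicate_false_append_listPow {x : List Bool} (hx : true ∈ x)
    (hlt : x ++ [true] < x.reverse ++ [true]) {m : ℕ} (hm : m ≠ 0) :
    IsAsymBracelet (replicate x.length false ++ true :: listPow (x ++ [true]) m) ∧
      ¬ IsPeriodic (replicate x.length false ++ true :: listPow (x ++ [true]) m) := by
  have hq : 0 < x.length := length_pos_of_mem hx
  have hw := (oneDense_length_append_true hx).listPow m
  have hW := (oneDense_length_append_true (mem_reverse.2 hx)).listPow m
  rw [length_reverse] at hW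
  set γ := replicate x.length false ++ true :: listPow (x ++ [true]) m
  set γ' := replicate x.length false ++ true :: listPow (x.reverse ++ [true]) m
  have hstrict : ∀ k, 0 < k → k < γ.length → γ < γ.rotate k :=
    fun k hk0 hk => replicate_false_append_true_lt_rotate _ hq hw hk0 hk
  have hγγ' : γ < γ' := append_left_lt <|
    cons_lt_cons_iff.2 (Or.inr ⟨rfl, (listPow_lt_listPow_iff hm (by simp)).2 hlt⟩)
  refine ⟨⟨isNecklace_of_lt_rotate hstrict, fun k => ?_⟩,
    not_isPeriodic_of_lt_rotate (by simp [γ]) hstrict⟩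
  rw [reverse_replicate_false_append_listPow, rotate_rotate, ← rotate_mod]
  rcases Nat.eq_zero_or_pos ((x.length + k) % γ'.length) with h0 | hpos
  · rwa [h0, rotate_zero]
  · exact replicate_false_append_true_lt_rotate _ hq hW hpos (Nat.mod_lt _ (by simp))

theorem periodic_maps_to_aperiodic_general (n : ℕ) (α β : List Bool) (i : ℕ)
    (hα : α ∈ A n) (hi : 2 ≤ i) (heq : α = listPow β i) :
    (List.replicate (β.length - 1) false ++ [true] ++ listPow β (i - 1)) ∈ A n ∧
      ¬ IsPeriodic (List.replicate (β.length - 1) false ++ [true] ++ listPow β (i - 1)) := by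
  obtain ⟨hn, hα⟩ := hα
  subst heq
  have hβ := hα.of_listPow (by omega)
  obtain ⟨x, rfl, hx⟩ := hβ.exists_eq_append_true
  have hlt := hβ.2 1
  simp only [reverse_append, reverse_singleton, singleton_append, rotate_cons_succ,
    rotate_zero] at hlt
  obtain ⟨hγ, hγ_aperiodic⟩ :=
    isAsymBracelet_replicate_false_append_listPow hx hlt (m := i - 1) (by omega)
  rw [length_append, length_singleton, Nat.add_sub_cancel, append_assoc, singleton_append]
  refine ⟨⟨?_, hγ⟩, hγ_aperiodic⟩
  obtain ⟨j, rfl⟩ : ∃ j, i = j + 1 := ⟨i - 1, by omega⟩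
  rw [← hn]
  simp only [length_append, length_replicate, length_cons, length_nil, length_listPow,
    Nat.add_sub_cancel]
  ring

/-- Let `α ∈ A n` be periodic, `α = β^i` with `β = ap α` aperiodic,
`p = |β|`, and `i ≥ 2`.  Then `0^{p-1}·1·β^{i-1}` is an aperiodic asymmetric bracelet of
length `n`. -/
theorem periodic_maps_to_aperiodic (n : ℕ) (α β : List Bool) (i : ℕ)
    (hα : α ∈ A n) (hi : 2 ≤ i) (hβ : ¬ IsPeriodic β) (heq : α = listPow β i) :
    (List.replicate (β.length - 1) false ++ [true] ++ listPow β (i - 1)) ∈ A n ∧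
      ¬ IsPeriodic (List.replicate (β.length - 1) false ++ [true] ++ listPow β (i - 1)) :=
  periodic_maps_to_aperiodic_general n α β i hα hi heq
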